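/- Let B be a skew left brace, I an ideal of B, and X, Y subgroups of (B,+). Then (X+I)*(Y+I) ⊆ (X*Y)+I, where for subgroups H, K of (B,+) with I normal, H+I := {h+i : h ∈ H, i ∈ I} and (X*Y)+I := {z+i : z ∈ X*Y, i ∈ I}. -/

import Mathlib

/-- A *skew left brace* is a set with two group structures `(B,+)` and `(B,∘)`
(the latter written multiplicatively) satisfying `a∘(b+c) = a∘b - a + a∘c`.
The two identity elements automatically coincide. -/
class SkewLeftBrace (B : Type*) extends AddGroup B, Group B where
  mul_add_eq : ∀ a b c : B, a * (b + c) = a * b - a + a * c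

namespace SkewLeftBrace

variable {B : Type*} [SkewLeftBrace B]

/-- The map `λ_a : b ↦ -a + a∘b`. -/
def lmap (a b : B) : B := -a + a * b

/-- The brace star operation `a*b := -a + a∘b - b`. -/
def bstar (a b : B) : B := -a + a * b - b

/-- `X*Y`: the additive subgroup generated by all `bstar x y`, `x ∈ X`, `y ∈ Y`,
regarded as a set. -/
def setStar (X Y : Set B) : Set B :=
  ↑(AddSubgroup.closure {z : B | ∃ x ∈ X, ∃ y ∈ Y, z = bstar x y})

/-- Pointwise sum of two subsets. -/
def setSum (X Y : Set B) : Set B := {w : B | ∃ x ∈ X, ∃ y ∈ Y, w = x + y}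

/-- `X^Z := {z + x - z : x ∈ X, z ∈ Z}`. -/
def setConj (X Z : Set B) : Set B := {w : B | ∃ x ∈ X, ∃ z ∈ Z, w = z + x + -z}

/-- An ideal of a skew left brace: a subgroup of `(B,+)` which is normal in both
`(B,+)` and `(B,∘)` and invariant under all the maps `λ_a`. -/
structure IsIdeal (I : Set B) : Prop where
  zero_mem : (0 : B) ∈ I
  add_mem : ∀ ⦃x y : B⦄, x ∈ I → y ∈ I → x + y ∈ I
  neg_mem : ∀ ⦃x : B⦄, x ∈ I → -x ∈ I
  add_conj_mem : ∀ (b : B) ⦃x : B⦄, x ∈ I → b + x + -b ∈ I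
  mul_mem : ∀ ⦃x y : B⦄, x ∈ I → y ∈ I → x * y ∈ I
  inv_mem : ∀ ⦃x : B⦄, x ∈ I → x⁻¹ ∈ I
  mul_conj_mem : ∀ (b : B) ⦃x : B⦄, x ∈ I → b * x * b⁻¹ ∈ I
  lmap_mem : ∀ (a : B) ⦃x : B⦄, x ∈ I → lmap a x ∈ I

/-- A minimal ideal: a nonzero ideal whose only sub-ideals are `{0}` and itself. -/
def IsMinimalIdeal (I : Set B) : Prop :=
  IsIdeal I ∧ I ≠ {0} ∧ ∀ J : Set B, IsIdeal J → J ⊆ I → J = {0} ∨ J = I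

theorem mul_zero' (a : B) : a * (0 : B) = a := by
  have h := SkewLeftBrace.mul_add_eq a (0 : B) (0 : B)
  rw [add_zero] at h
  have h2 : a * (0:B) - a = 0 := (right_eq_add.mp h)
  exact sub_eq_zero.mp h2

theorem zero_eq_one : (0 : B) = 1 := by
  have h := mul_zero' (1 : B)
  rw [one_mul] at h
  exact h

theorem IsIdeal.one_mem {I : Set B} (h : IsIdeal I) : (1 : B) ∈ I :=
  (zero_eq_one (B := B)) ▸ h.zero_mem

variable (B) in
/-- A skew left brace is *semiprime* if `I*I ≠ {0}` for every nonzero ideal `I`. -/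
def Semiprime : Prop := ∀ I : Set B, IsIdeal I → I ≠ {0} → setStar I I ≠ {0}

variable (B) in
/-- A skew left brace is *prime*... (and) *simple* if its only ideals are `{0}` and `B`,
and these are distinct. -/
def Simple : Prop :=
  ({0} : Set B) ≠ Set.univ ∧ ∀ I : Set B, IsIdeal I → I = {0} ∨ I = Set.univ

variable (B) in
/-- A skew left brace is *Artinian* if every descending chain of ideals stabilizes. -/
def Artinian : Prop :=
  ∀ f : ℕ → Set B, (∀ n, IsIdeal (f n)) → (∀ n, f (n + 1) ⊆ f n) →
    ∃ N, ∀ n, N ≤ n → f n = f N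

/-- The `*`-products of copies of a fixed set `I`. -/
inductive IsStarPowerOf (I : Set B) : Set B → Prop
  | base : IsStarPowerOf I I
  | star {X Y : Set B} : IsStarPowerOf I X → IsStarPowerOf I Y →
      IsStarPowerOf I (setStar X Y)

variable (B) in
/-- A skew left brace is *strongly semiprime* if for every nonzero ideal `I`, every
`*`-product of copies of `I` is nonzero. -/
def StronglySemiprime : Prop :=
  ∀ I : Set B, IsIdeal I → I ≠ {0} → ∀ X : Set B, IsStarPowerOf I X → X ≠ {0}

/-- The `*`-products of nonzero ideals. -/
inductive IsStarProdOfNonzeroIdeals : Set B → Prop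
  | ideal {I : Set B} : IsIdeal I → I ≠ {0} → IsStarProdOfNonzeroIdeals I
  | star {X Y : Set B} : IsStarProdOfNonzeroIdeals X → IsStarProdOfNonzeroIdeals Y →
      IsStarProdOfNonzeroIdeals (setStar X Y)

variable (B) in
/-- A skew left brace is *strongly prime* if every `*`-product of nonzero ideals is nonzero. -/
def StronglyPrime : Prop :=
  ∀ X : Set B, IsStarProdOfNonzeroIdeals X → X ≠ {0}

end SkewLeftBrace
namespace SkewLeftBrace

variable {B : Type*} [SkewLeftBrace B]

/-- An ideal, regarded as a skew left brace with the restricted operations. -/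
def IsIdeal.brace {I : Set B} (h : IsIdeal I) : SkewLeftBrace I :=
  letI : Zero I := ⟨⟨0, h.zero_mem⟩⟩
  letI : Add I := ⟨fun x y => ⟨x.1 + y.1, h.add_mem x.2 y.2⟩⟩
  letI : Neg I := ⟨fun x => ⟨-x.1, h.neg_mem x.2⟩⟩
  letI : One I := ⟨⟨1, h.one_mem⟩⟩
  letI : Mul I := ⟨fun x y => ⟨x.1 * y.1, h.mul_mem x.2 y.2⟩⟩
  letI : Inv I := ⟨fun x => ⟨x.1⁻¹, h.inv_mem x.2⟩⟩
  { add := (· + ·)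
    zero := 0
    neg := (- ·)
    nsmul := nsmulRec
    zsmul := zsmulRec
    add_assoc := fun a b c => Subtype.ext (add_assoc a.1 b.1 c.1)
    zero_add := fun a => Subtype.ext (zero_add a.1)
    add_zero := fun a => Subtype.ext (add_zero a.1)
    neg_add_cancel := fun a => Subtype.ext (neg_add_cancel a.1)
    mul := (· * ·)
    one := 1
    inv := (·⁻¹)
    npow := npowRec
    zpow := zpowRec
    mul_assoc := fun a b c => Subtype.ext (mul_assoc a.1 b.1 c.1)
    one_mul := fun a => Subtype.ext (one_mul a.1)
    mul_one := fun a => Subtype.ext (mul_one a.1)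
    inv_mul_cancel := fun a => Subtype.ext (inv_mul_cancel a.1)
    mul_add_eq := fun a b c =>
      Subtype.ext (by
        show a.1 * (b.1 + c.1) = a.1 * b.1 + -a.1 + a.1 * c.1
        rw [SkewLeftBrace.mul_add_eq, sub_eq_add_neg]) }

/-- The direct product of two skew left braces, with componentwise operations. -/
def prodBrace (B₁ B₂ : Type*) [SkewLeftBrace B₁] [SkewLeftBrace B₂] :
    SkewLeftBrace (B₁ × B₂) :=
  { (inferInstance : AddGroup (B₁ × B₂)), (inferInstance : Group (B₁ × B₂)) with
    mul_add_eq := fun a b c =>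
      Prod.ext (by simp [SkewLeftBrace.mul_add_eq]) (by simp [SkewLeftBrace.mul_add_eq]) }

/-- Two skew left braces are isomorphic if there is a bijection preserving `+` and `∘`. -/
def IsBraceIsomorphic (A C : Type*) [SkewLeftBrace A] [SkewLeftBrace C] : Prop :=
  ∃ f : A ≃ C, (∀ x y : A, f (x + y) = f x + f y) ∧ (∀ x y : A, f (x * y) = f x * f y)

/-- A group homomorphism from `(B₂,∘)` to the automorphism group `Aut(B₁,+,∘)` of the
skew left brace `B₁`, presented as an action `act : B₂ → B₁ → B₁` by skew left brace
automorphisms. -/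
structure BraceActionHom (B₂ B₁ : Type*) [SkewLeftBrace B₂] [SkewLeftBrace B₁] where
  act : B₂ → B₁ → B₁
  act_bijective : ∀ a : B₂, Function.Bijective (act a)
  act_add : ∀ (a : B₂) (x y : B₁), act a (x + y) = act a x + act a y
  act_mul : ∀ (a : B₂) (x y : B₁), act a (x * y) = act a x * act a y
  act_hom : ∀ (a b : B₂) (x : B₁), act (a * b) x = act a (act b x)
  act_one : ∀ x : B₁, act (1 : B₂) x = x

variable {B₁ B₂ : Type*} [SkewLeftBrace B₁] [SkewLeftBrace B₂]

theorem BraceActionHom.act_one' (α : BraceActionHom B₂ B₁) (a : B₂) :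
    α.act a (1 : B₁) = 1 := by
  have h := α.act_mul a 1 1
  rw [mul_one] at h
  exact mul_eq_left.mp h.symm

/-- The underlying type of the semidirect product of two skew left braces. -/
@[ext]
structure SDP (B₁ B₂ : Type*) where
  fst : B₁
  snd : B₂

/-- The semidirect product `B₁ ⋊_α B₂` of skew left braces: the additive group is the
direct product, while `(a₁,a₂) ∘ (b₁,b₂) = (a₁ ∘ α_{a₂}(b₁), a₂ ∘ b₂)`. -/
def BraceActionHom.sdp (α : BraceActionHom B₂ B₁) : SkewLeftBrace (SDP B₁ B₂) :=
  letI : Zero (SDP B₁ B₂) := ⟨⟨0, 0⟩⟩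
  letI : Add (SDP B₁ B₂) := ⟨fun p q => ⟨p.fst + q.fst, p.snd + q.snd⟩⟩
  letI : Neg (SDP B₁ B₂) := ⟨fun p => ⟨-p.fst, -p.snd⟩⟩
  letI : One (SDP B₁ B₂) := ⟨⟨1, 1⟩⟩
  letI : Mul (SDP B₁ B₂) := ⟨fun p q => ⟨p.fst * α.act p.snd q.fst, p.snd * q.snd⟩⟩
  letI : Inv (SDP B₁ B₂) := ⟨fun p => ⟨α.act p.snd⁻¹ p.fst⁻¹, p.snd⁻¹⟩⟩
  { add := (· + ·)
    zero := 0
    neg := (- ·)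
    nsmul := nsmulRec
    zsmul := zsmulRec
    add_assoc := fun a b c =>
      SDP.ext (add_assoc a.fst b.fst c.fst) (add_assoc a.snd b.snd c.snd)
    zero_add := fun a => SDP.ext (zero_add a.fst) (zero_add a.snd)
    add_zero := fun a => SDP.ext (add_zero a.fst) (add_zero a.snd)
    neg_add_cancel := fun a => SDP.ext (neg_add_cancel a.fst) (neg_add_cancel a.snd)
    mul := (· * ·)
    one := 1
    inv := (·⁻¹)
    npow := npowRec
    zpow := zpowRec
    mul_assoc := fun a b c =>
      SDP.ext
        (by show (a.fst * α.act a.snd b.fst) * α.act (a.snd * b.snd) c.fst =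
              a.fst * α.act a.snd (b.fst * α.act b.snd c.fst)
            rw [α.act_hom, α.act_mul, mul_assoc])
        (mul_assoc a.snd b.snd c.snd)
    one_mul := fun a =>
      SDP.ext (by show (1 : B₁) * α.act 1 a.fst = a.fst; rw [α.act_one, one_mul])
        (one_mul a.snd)
    mul_one := fun a =>
      SDP.ext (by show a.fst * α.act a.snd (1 : B₁) = a.fst; rw [α.act_one', mul_one])
        (mul_one a.snd)
    inv_mul_cancel := fun a =>
      SDP.ext
        (by show α.act a.snd⁻¹ a.fst⁻¹ * α.act a.snd⁻¹ a.fst = 1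
            rw [← α.act_mul, inv_mul_cancel, α.act_one'])
        (inv_mul_cancel a.snd)
    mul_add_eq := fun a b c =>
      SDP.ext
        (by show a.fst * α.act a.snd (b.fst + c.fst) =
              a.fst * α.act a.snd b.fst + -a.fst + a.fst * α.act a.snd c.fst
            rw [α.act_add, SkewLeftBrace.mul_add_eq, sub_eq_add_neg])
        (by show a.snd * (b.snd + c.snd) = a.snd * b.snd + -a.snd + a.snd * c.snd
            rw [SkewLeftBrace.mul_add_eq, sub_eq_add_neg]) }

end SkewLeftBrace

/-!
Both sides are compared modulo `I`. Writing `x + i = x ∘ λ_{x⁻¹}(i)`, the identities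
`(a ∘ b) * c = λ_a(b * c) + a * c` and `a * (b + c) = a * b + b + (λ_a(c) - c) - b`
show that `(x + i) * (y + j)` differs from `x * y` only by elements of `I` on either side,
because `I * B ⊆ I`. As `I` is additively normal, `(X*Y) + I` is the additive subgroup
`(X*Y) ⊔ I`, so it contains the subgroup generated by all such `(x + i) * (y + j)`.
-/

namespace SkewLeftBrace

variable {B : Type*} [SkewLeftBrace B]

theorem mul_eq_add_lmap (a b : B) : a * b = a + lmap a b := by
  rw [lmap, add_neg_cancel_left]

theorem bstar_eq_lmap_sub (a b : B) : bstar a b = lmap a b - b := rfl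

theorem lmap_add (a b c : B) : lmap a (b + c) = lmap a b + lmap a c := by
  simp only [lmap, mul_add_eq, sub_eq_add_neg, add_assoc]

theorem lmap_neg (a b : B) : lmap a (-b) = -lmap a b :=
  map_neg (AddMonoidHom.mk' (lmap a) (lmap_add a)) b

theorem lmap_one (b : B) : lmap 1 b = b := by
  rw [lmap, one_mul, ← zero_eq_one, neg_zero, zero_add]

theorem lmap_mul (a b c : B) : lmap (a * b) c = lmap a (lmap b c) := by
  change _ = lmap a (-b + b * c)
  rw [lmap_add, lmap_neg]
  simp only [lmap, mul_assoc, neg_add_rev, neg_neg, add_assoc, add_neg_cancel_left]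

theorem add_eq_mul_lmap_inv (x i : B) : x + i = x * lmap x⁻¹ i := by
  rw [mul_eq_add_lmap, ← lmap_mul, mul_inv_cancel, lmap_one]

theorem bstar_mul_left (a b c : B) : bstar (a * b) c = lmap a (bstar b c) + bstar a c := by
  rw [bstar_eq_lmap_sub, lmap_mul, ← sub_add_cancel (lmap b c) c, lmap_add,
    ← bstar_eq_lmap_sub, add_sub_assoc, ← bstar_eq_lmap_sub]

theorem bstar_add_right (a b c : B) :
    bstar a (b + c) = bstar a b + (b + (lmap a c + -c) + -b) := by
  simp only [bstar_eq_lmap_sub, lmap_add, sub_eq_add_neg, neg_add_rev, add_assoc,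
    neg_add_cancel_left]

theorem IsIdeal.bstar_mem {I : Set B} (hI : IsIdeal I) {i : B} (hi : i ∈ I) (y : B) :
    bstar i y ∈ I := by
  have hconj : y⁻¹ * i * y ∈ I := by simpa using hI.mul_conj_mem y⁻¹ hi
  have hiy : i * y = y + lmap y (y⁻¹ * i * y) := by
    rw [← mul_eq_add_lmap]; group
  rw [bstar, sub_eq_add_neg, hiy, add_assoc, add_assoc, ← add_assoc y]
  exact hI.add_mem (hI.neg_mem hi) (hI.add_conj_mem y (hI.lmap_mem y hconj))

theorem IsIdeal.bstar_add_add {I : Set B} (hI : IsIdeal I) (x y : B) {i j : B}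
    (hi : i ∈ I) (hj : j ∈ I) :
    ∃ k ∈ I, ∃ m ∈ I, bstar (x + i) (y + j) = k + bstar x y + m := by
  rw [bstar_add_right, add_eq_mul_lmap_inv x i, bstar_mul_left]
  exact ⟨_, hI.lmap_mem x (hI.bstar_mem (hI.lmap_mem x⁻¹ hi) y), _,
    hI.add_conj_mem y (hI.add_mem (hI.lmap_mem _ hj) (hI.neg_mem hj)), rfl⟩

def IsIdeal.toAddSubgroup {I : Set B} (hI : IsIdeal I) : AddSubgroup B where
  carrier := I
  zero_mem' := hI.zero_mem
  add_mem' := fun hx hy => hI.add_mem hx hy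
  neg_mem' := fun hx => hI.neg_mem hx

instance IsIdeal.toAddSubgroup_normal {I : Set B} (hI : IsIdeal I) :
    hI.toAddSubgroup.Normal :=
  ⟨fun _ hn g => hI.add_conj_mem g hn⟩

theorem setSum_eq_sup (H N : AddSubgroup B) [N.Normal] :
    setSum (H : Set B) N = ↑(H ⊔ N) := by
  rw [AddSubgroup.add_normal]
  ext w
  simp only [setSum, Set.mem_ofPred_eq, Set.mem_add, eq_comm]

end SkewLeftBrace

open SkewLeftBrace

/-- For an ideal `I` and additive subgroups `X, Y` of a skew left brace `B`,
`(X+I)*(Y+I) ⊆ (X*Y)+I`. -/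
theorem star_of_sums_subset {B : Type*} [SkewLeftBrace B]
    (I : Set B) (hI : IsIdeal I) (X Y : AddSubgroup B) :
    setStar (setSum (↑X : Set B) I) (setSum (↑Y : Set B) I) ⊆
      setSum (setStar (↑X : Set B) (↑Y : Set B)) I := by
  change _ ⊆ setSum _ (hI.toAddSubgroup : Set B)
  rw [setStar, setStar, setSum_eq_sup, SetLike.coe_subset_coe, AddSubgroup.closure_le]
  rintro _ ⟨_, ⟨x, hx, i, hi, rfl⟩, _, ⟨y, hy, j, hj, rfl⟩, rfl⟩
  obtain ⟨k, hk, m, hm, hkm⟩ := hI.bstar_add_add x y hi hj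
  have hxy : bstar x y ∈ AddSubgroup.closure {z | ∃ x ∈ X, ∃ y ∈ Y, z = bstar x y} :=
    AddSubgroup.subset_closure ⟨x, hx, y, hy, rfl⟩
  rw [SetLike.mem_coe, hkm]
  exact add_mem (add_mem (AddSubgroup.mem_sup_right hk) (AddSubgroup.mem_sup_left hxy))
    (AddSubgroup.mem_sup_right hm)
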